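/- If V : ℕ × ℕ → ℝ is coordinatewise nondecreasing and submodular, then for all (a,b) ∈ ℕ × ℕ with a ≥ b: if Q_sense V (a,b) > Q_comm V (a,b) (communication is strictly optimal at (a,b)), then Q_sense V (a+1,b) > Q_comm V (a+1,b); and if Q_sense V (a,b) ≤ Q_comm V (a,b) (sensing is optimal at (a,b)), then Q_sense V (a,b+1) ≤ Q_comm V (a,b+1). That is, the communication region is closed under increasing the source age and the sensing region is closed under increasing the base-station age, within the region a ≥ b. -/

import Mathlib

noncomputable def Qsense (γ lams cs : ℝ) (V : ℕ × ℕ → ℝ) (p : ℕ × ℕ) : ℝ :=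
  (p.1 : ℝ) + cs + γ * (lams * V (p.1 + 1, 1) + (1 - lams) * V (p.1 + 1, p.2 + 1))

noncomputable def Qcomm (γ lamc cc : ℝ) (V : ℕ × ℕ → ℝ) (p : ℕ × ℕ) : ℝ :=
  (p.1 : ℝ) + cc + γ * (lamc * V (p.2 + 1, p.2 + 1) + (1 - lamc) * V (p.1 + 1, p.2 + 1))

noncomputable def Delta (γ lams lamc cs cc : ℝ) (V : ℕ × ℕ → ℝ) (p : ℕ × ℕ) : ℝ :=
  Qsense γ lams cs V p - Qcomm γ lamc cc V p

noncomputable def Tbell (γ lams lamc cs cc : ℝ) (V : ℕ × ℕ → ℝ) : ℕ × ℕ → ℝ :=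
  fun p => min (Qsense γ lams cs V p) (Qcomm γ lamc cc V p)

/-- `V` is nondecreasing in each argument separately. -/
def CoordNondecr (V : ℕ × ℕ → ℝ) : Prop :=
  (∀ a a' b : ℕ, a ≤ a' → V (a, b) ≤ V (a', b)) ∧
  (∀ a b b' : ℕ, b ≤ b' → V (a, b) ≤ V (a, b'))

/-- Submodularity on the lattice `ℕ × ℕ` (componentwise max/min). -/
def Submodular (W : ℕ × ℕ → ℝ) : Prop :=
  ∀ x y : ℕ × ℕ, W (x ⊔ y) + W (x ⊓ y) ≤ W x + W y

/-!
Put `Δ = Q_sense - Q_comm`. Raising `a` changes `Δ` by `γ` times a nonnegative combination of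
first-coordinate increments of `V`, so `Δ` does not decrease. Raising `b` changes `Δ` by
`γ ((λ_c - λ_s) D - λ_c D')`, with `D` the second-coordinate increment of `V` at `(a+1, b+1)` and
`D'` its diagonal increment at `(b+1, b+1)`; since `b ≤ a`, submodularity (decreasing differences)
and monotonicity give `0 ≤ D ≤ D'`, so `Δ` does not increase.
-/

theorem Submodular.sub_le_sub_of_le {V : ℕ × ℕ → ℝ} (hV : Submodular V) {a a' b b' : ℕ}
    (ha : a ≤ a') (hb : b ≤ b') : V (a', b') - V (a', b) ≤ V (a, b') - V (a, b) := by
  have h := hV (a, b') (a', b)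
  rw [Prod.mk_sup_mk, Prod.mk_inf_mk, sup_eq_right.2 ha, sup_eq_left.2 hb, inf_eq_left.2 ha,
    inf_eq_right.2 hb] at h
  linarith

theorem snd_increment_le_diag_increment {V : ℕ × ℕ → ℝ} (hmono : CoordNondecr V)
    (hsub : Submodular V) {a b : ℕ} (hba : b ≤ a) :
    V (a, b + 1) - V (a, b) ≤ V (b + 1, b + 1) - V (b, b) :=
  calc V (a, b + 1) - V (a, b) ≤ V (b, b + 1) - V (b, b) := hsub.sub_le_sub_of_le hba b.le_succ
    _ ≤ V (b + 1, b + 1) - V (b, b) := by gcongr; exact hmono.1 _ _ _ b.le_succ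

section Delta

variable (γ lams lamc cs cc : ℝ) (V : ℕ × ℕ → ℝ) (a b : ℕ)

theorem Delta_succ_fst_sub :
    Delta γ lams lamc cs cc V (a + 1, b) - Delta γ lams lamc cs cc V (a, b) =
      γ * (lams * (V (a + 2, 1) - V (a + 1, 1)) +
        (lamc - lams) * (V (a + 2, b + 1) - V (a + 1, b + 1))) := by
  simp only [Delta, Qsense, Qcomm]
  push_cast
  ring

theorem Delta_succ_snd_sub :
    Delta γ lams lamc cs cc V (a, b + 1) - Delta γ lams lamc cs cc V (a, b) =
      γ * ((lamc - lams) * (V (a + 1, b + 2) - V (a + 1, b + 1)) -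
        lamc * (V (b + 2, b + 2) - V (b + 1, b + 1))) := by
  simp only [Delta, Qsense, Qcomm]
  ring

variable {γ lams lamc V}

theorem Delta_le_Delta_succ_fst (hγ : 0 ≤ γ) (hs0 : 0 ≤ lams) (hsc : lams ≤ lamc)
    (hmono : CoordNondecr V) :
    Delta γ lams lamc cs cc V (a, b) ≤ Delta γ lams lamc cs cc V (a + 1, b) := by
  have h₁ : 0 ≤ V (a + 2, 1) - V (a + 1, 1) := sub_nonneg.2 (hmono.1 _ _ _ (by omega))
  have h₂ : 0 ≤ V (a + 2, b + 1) - V (a + 1, b + 1) := sub_nonneg.2 (hmono.1 _ _ _ (by omega))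
  rw [← sub_nonneg, Delta_succ_fst_sub]
  exact mul_nonneg hγ (add_nonneg (mul_nonneg hs0 h₁) (mul_nonneg (sub_nonneg.2 hsc) h₂))

theorem Delta_succ_snd_le_Delta (hγ : 0 ≤ γ) (hs0 : 0 ≤ lams) (hsc : lams ≤ lamc)
    (hmono : CoordNondecr V) (hsub : Submodular V) (hba : b ≤ a) :
    Delta γ lams lamc cs cc V (a, b + 1) ≤ Delta γ lams lamc cs cc V (a, b) := by
  set D := V (a + 1, b + 2) - V (a + 1, b + 1)
  set D' := V (b + 2, b + 2) - V (b + 1, b + 1)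
  have hD : 0 ≤ D := sub_nonneg.2 (hmono.2 _ _ _ (by omega))
  have hDD' : D ≤ D' := snd_increment_le_diag_increment hmono hsub (by omega : b + 1 ≤ a + 1)
  have key : (lamc - lams) * D ≤ lamc * D' :=
    calc (lamc - lams) * D ≤ lamc * D := mul_le_mul_of_nonneg_right (by linarith) hD
      _ ≤ lamc * D' := mul_le_mul_of_nonneg_left hDD' (hs0.trans hsc)
  rw [← sub_nonpos, Delta_succ_snd_sub]
  exact mul_nonpos_of_nonneg_of_nonpos hγ (sub_nonpos.2 key)

end Delta

theorem regions_closed_under_age_increase_general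
    (γ lams lamc cs cc : ℝ)
    (hγ0 : 0 < γ) (hs0 : 0 ≤ lams) (hsc : lams ≤ lamc)
    (V : ℕ × ℕ → ℝ) (hmono : CoordNondecr V) (hsub : Submodular V) :
    ∀ a b : ℕ, b ≤ a →
      ((Qcomm γ lamc cc V (a, b) < Qsense γ lams cs V (a, b) →
        Qcomm γ lamc cc V (a + 1, b) < Qsense γ lams cs V (a + 1, b)) ∧
       (Qsense γ lams cs V (a, b) ≤ Qcomm γ lamc cc V (a, b) →
        Qsense γ lams cs V (a, b + 1) ≤ Qcomm γ lamc cc V (a, b + 1))) := by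
  intro a b hba
  have hfst := Delta_le_Delta_succ_fst cs cc a b hγ0.le hs0 hsc hmono
  have hsnd := Delta_succ_snd_le_Delta cs cc a b hγ0.le hs0 hsc hmono hsub hba
  simp only [Delta] at hfst hsnd
  exact ⟨fun h => by linarith, fun h => by linarith⟩

/-- Within the region `a ≥ b`, the communication region is closed under increasing the
source age and the sensing region is closed under increasing the base-station age. -/
theorem regions_closed_under_age_increase
    (γ lams lamc cs cc : ℝ)
    (hγ0 : 0 < γ) (hγ1 : γ < 1) (hs0 : 0 ≤ lams) (hsc : lams ≤ lamc) (hc1 : lamc ≤ 1)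
    (hcs : 0 ≤ cs) (hcc : 0 ≤ cc)
    (V : ℕ × ℕ → ℝ) (hmono : CoordNondecr V) (hsub : Submodular V) :
    ∀ a b : ℕ, b ≤ a →
      ((Qcomm γ lamc cc V (a, b) < Qsense γ lams cs V (a, b) →
        Qcomm γ lamc cc V (a + 1, b) < Qsense γ lams cs V (a + 1, b)) ∧
       (Qsense γ lams cs V (a, b) ≤ Qcomm γ lamc cc V (a, b) →
        Qsense γ lams cs V (a, b + 1) ≤ Qcomm γ lamc cc V (a, b + 1))) :=
  regions_closed_under_age_increase_general γ lams lamc cs cc hγ0 hs0 hsc V hmono hsub
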